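/- arXiv:1802.03425 — 6 statements merged into one kernel-verified Lean document; each statement's English description precedes it below -/
import Mathlib

section
/- Let P and Q be probability measures on a measurable space with densities p, q with respect to a common σ-finite dominating measure ν. Then the total variation distance of the n-fold product measures satisfies ‖P^⊗n − Q^⊗n‖_TV ≤ 1 − (1 − ‖P − Q‖_TV)^n. -/
/-!
Writing `‖P − Q‖_TV = 1 − ∫ p ⊓ q`, it suffices to bound the overlap of the product densities
from below. Pointwise, `∏ i, (p (x i) ⊓ q (x i)) ≤ (∏ i, p (x i)) ⊓ ∏ i, q (x i)`, and by Fubini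
the left-hand side integrates to `(∫ p ⊓ q)ⁿ = (1 − ‖P − Q‖_TV)ⁿ`.
-/

open MeasureTheory Finset

lemma abs_sub_eq_add_sub_two_mul_min (a b : ℝ) : |a - b| = a + b - 2 * min a b := by
  linarith [max_sub_min_eq_abs' a b, min_add_max a b]

lemma prod_min_le_min_prod {ι : Type*} (s : Finset ι) {f g : ι → ℝ}
    (hf : ∀ i, 0 ≤ f i) (hg : ∀ i, 0 ≤ g i) :
    ∏ i ∈ s, min (f i) (g i) ≤ min (∏ i ∈ s, f i) (∏ i ∈ s, g i) :=
  le_min (prod_le_prod (fun i _ => le_min (hf i) (hg i)) fun _ _ => min_le_left _ _)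
    (prod_le_prod (fun i _ => le_min (hf i) (hg i)) fun _ _ => min_le_right _ _)

namespace MeasureTheory

variable {α : Type*} [MeasurableSpace α] {μ : Measure α} {f g : α → ℝ}

lemma integral_abs_sub_eq (hf : Integrable f μ) (hg : Integrable g μ) :
    ∫ x, |f x - g x| ∂μ = ∫ x, f x ∂μ + ∫ x, g x ∂μ - 2 * ∫ x, min (f x) (g x) ∂μ := by
  simp_rw [abs_sub_eq_add_sub_two_mul_min]
  have hsum : Integrable (fun x => f x + g x) μ := hf.add hg
  have hmin : Integrable (fun x => min (f x) (g x)) μ := hf.inf hg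
  rw [integral_sub hsum (hmin.const_mul 2), integral_add hf hg, integral_const_mul]

lemma half_integral_abs_sub_eq_one_sub_integral_min (hf : Integrable f μ)
    (hg : Integrable g μ) (hf1 : ∫ x, f x ∂μ = 1) (hg1 : ∫ x, g x ∂μ = 1) :
    (1 / 2) * ∫ x, |f x - g x| ∂μ = 1 - ∫ x, min (f x) (g x) ∂μ := by
  rw [integral_abs_sub_eq hf hg, hf1, hg1]
  ring

lemma integral_pi_prod_eq_one {ι : Type*} [Fintype ι] [SigmaFinite μ] (hf1 : ∫ x, f x ∂μ = 1) :
    ∫ x : ι → α, ∏ i, f (x i) ∂(Measure.pi fun _ => μ) = 1 := by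
  rw [integral_fintype_prod_eq_pow, hf1, one_pow]

lemma integral_min_pow_card_le_integral_min_pi_prod {ι : Type*} [Fintype ι] [SigmaFinite μ]
    (hf : Integrable f μ) (hg : Integrable g μ) (hf0 : ∀ x, 0 ≤ f x) (hg0 : ∀ x, 0 ≤ g x) :
    (∫ x, min (f x) (g x) ∂μ) ^ Fintype.card ι ≤
      ∫ x : ι → α, min (∏ i, f (x i)) (∏ i, g (x i)) ∂(Measure.pi fun _ => μ) := by
  rw [← integral_fintype_prod_eq_pow]
  exact integral_mono (Integrable.fintype_prod fun _ => hf.inf hg)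
    ((Integrable.fintype_prod fun _ => hf).inf (Integrable.fintype_prod fun _ => hg))
    fun x => prod_min_le_min_prod _ (fun i => hf0 (x i)) fun i => hg0 (x i)

theorem half_integral_abs_sub_pi_prod_le {ι : Type*} [Fintype ι] [SigmaFinite μ]
    (hf : Integrable f μ) (hg : Integrable g μ) (hf0 : ∀ x, 0 ≤ f x) (hg0 : ∀ x, 0 ≤ g x)
    (hf1 : ∫ x, f x ∂μ = 1) (hg1 : ∫ x, g x ∂μ = 1) :
    (1 / 2) * ∫ x : ι → α, |(∏ i, f (x i)) - ∏ i, g (x i)| ∂(Measure.pi fun _ => μ)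
      ≤ 1 - (1 - (1 / 2) * ∫ x, |f x - g x| ∂μ) ^ Fintype.card ι := by
  rw [half_integral_abs_sub_eq_one_sub_integral_min (Integrable.fintype_prod fun _ => hf)
      (Integrable.fintype_prod fun _ => hg) (integral_pi_prod_eq_one hf1)
      (integral_pi_prod_eq_one hg1),
    half_integral_abs_sub_eq_one_sub_integral_min hf hg hf1 hg1, sub_sub_cancel]
  linarith [integral_min_pow_card_le_integral_min_pi_prod (ι := ι) hf hg hf0 hg0]

end MeasureTheory

theorem stmt1_general {α : Type*} [MeasurableSpace α] (ν : Measure α) [SigmaFinite ν]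
    (n : ℕ) (p q : α → ℝ)
    (hp0 : ∀ x, 0 ≤ p x) (hq0 : ∀ x, 0 ≤ q x)
    (hpi : Integrable p ν) (hqi : Integrable q ν)
    (hp1 : ∫ x, p x ∂ν = 1) (hq1 : ∫ x, q x ∂ν = 1) :
    (1/2) * ∫ x : Fin n → α, |(∏ i, p (x i)) - ∏ i, q (x i)| ∂(Measure.pi fun _ => ν)
      ≤ 1 - (1 - (1/2) * ∫ x, |p x - q x| ∂ν) ^ n := by
  simpa using half_integral_abs_sub_pi_prod_le (ι := Fin n) hpi hqi hp0 hq0 hp1 hq1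

/-- If `P, Q` are probability measures with densities `p, q` with respect to a common
σ-finite measure `ν`, then the total variation distance of the `n`-fold product
measures (expressed via the product densities) satisfies
`‖P^⊗n − Q^⊗n‖_TV ≤ 1 − (1 − ‖P − Q‖_TV)^n`, where `‖P − Q‖_TV = (1/2)∫|p−q| dν`. -/
theorem stmt1 {α : Type*} [MeasurableSpace α] (ν : Measure α) [SigmaFinite ν]
    (n : ℕ) (p q : α → ℝ)
    (hpm : Measurable p) (hqm : Measurable q)
    (hp0 : ∀ x, 0 ≤ p x) (hq0 : ∀ x, 0 ≤ q x)
    (hpi : Integrable p ν) (hqi : Integrable q ν)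
    (hp1 : ∫ x, p x ∂ν = 1) (hq1 : ∫ x, q x ∂ν = 1) :
    (1/2) * ∫ x : Fin n → α, |(∏ i, p (x i)) - ∏ i, q (x i)| ∂(Measure.pi fun _ => ν)
      ≤ 1 - (1 - (1/2) * ∫ x, |p x - q x| ∂ν) ^ n :=
  stmt1_general ν n p q hp0 hq0 hpi hqi hp1 hq1
end

section
/- For a probability measure ν and nonnegative measurable functions p_i, q_i (i = 1,…,n), one has ∫ (∏_{i=1}^n p_i(x_i)) ∧ (∏_{i=1}^n q_i(x_i)) dν^⊗n ≥ ∏_{i=1}^n ∫ p_i ∧ q_i dν. -/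
open MeasureTheory ProbabilityTheory
open scoped ENNReal

theorem lintegral_fintype_prod_eq_prod {ι : Type*} [Fintype ι] {E : ι → Type*}
    [∀ i, MeasurableSpace (E i)] (μ : (i : ι) → Measure (E i)) [∀ i, IsProbabilityMeasure (μ i)]
    {f : (i : ι) → E i → ℝ≥0∞} (hf : ∀ i, Measurable (f i)) :
    ∫⁻ x, ∏ i, f i (x i) ∂Measure.pi μ = ∏ i, ∫⁻ y, f i y ∂μ i := by
  rw [lintegral_prod_eq_prod_lintegral_of_indepFun _ _
    (iIndepFun_pi fun i => (hf i).aemeasurable) fun i => (hf i).comp (measurable_pi_apply i)]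
  exact Finset.prod_congr rfl fun i _ => (measurePreserving_eval μ i).lintegral_comp (hf i)

/-- For a probability measure `ν` and nonnegative measurable functions `p_i, q_i`,
`∫ (∏ p_i(x_i)) ∧ (∏ q_i(x_i)) dν^⊗n ≥ ∏ ∫ p_i ∧ q_i dν`. -/
theorem stmt2 {α : Type*} [MeasurableSpace α] (ν : Measure α) [IsProbabilityMeasure ν]
    (n : ℕ) (p q : Fin n → α → ℝ≥0∞)
    (hp : ∀ i, Measurable (p i)) (hq : ∀ i, Measurable (q i)) :
    ∏ i, ∫⁻ x, min (p i x) (q i x) ∂ν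
      ≤ ∫⁻ x : Fin n → α, min (∏ i, p i (x i)) (∏ i, q i (x i))
          ∂(Measure.pi fun _ => ν) := by
  rw [← lintegral_fintype_prod_eq_prod _ fun i => (hp i).min (hq i)]
  exact lintegral_mono fun x => Finset.prod_min_le
end

section
/- Let g(x) = 960 x²(1/2 − x)² 1_{[0,1/2]}(x). For any θ ∈ (0,1/2), ∫₀¹ √(g(x−θ) g(x)) dx = 1 − 20θ²(1 − 2θ + 8θ³/5), and hence the squared Hellinger distance between the laws with densities g(·−θ) and g satisfies H² = 40θ²(1 − 2θ + 8θ³/5). -/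
open MeasureTheory Real

/-- The density `g(x) = 960 x²(1/2 − x)² 1_{[0,1/2]}(x)`. -/
noncomputable def gdens (x : ℝ) : ℝ :=
  Set.indicator (Set.Icc 0 (1/2)) (fun y => 960 * y^2 * (1/2 - y)^2) x

/-!
On `[θ, 1/2]` the function `√(g(x − θ) g(x))` is the polynomial
`960 x (x − θ)(1/2 − x)(1/2 + θ − x)`, and it vanishes elsewhere, so the affinity is a polynomial
integral. Since both densities have mass one on `[0, 1]` and `(√p − √q)² = p + q − 2√(pq)`,
the Hellinger integral equals `2 − 2 · affinity`.
-/

open Set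

theorem integral_eq_integral_of_eqOn_zero {f : ℝ → ℝ} (hf : Continuous f) {a b c d : ℝ}
    (hab : a ≤ b) (hcd : c ≤ d) (hl : EqOn f 0 (Icc a b)) (hr : EqOn f 0 (Icc c d)) :
    ∫ x in a..d, f x = ∫ x in b..c, f x := by
  have hl' : ∫ x in a..b, f x = 0 := by
    rw [intervalIntegral.integral_congr (uIcc_of_le hab ▸ hl)]
    simp
  have hr' : ∫ x in c..d, f x = 0 := by
    rw [intervalIntegral.integral_congr (uIcc_of_le hcd ▸ hr)]
    simp
  rw [← intervalIntegral.integral_add_adjacent_intervals (hf.intervalIntegrable a b)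
      (hf.intervalIntegrable b d),
    ← intervalIntegral.integral_add_adjacent_intervals (hf.intervalIntegrable b c)
      (hf.intervalIntegrable c d), hl', hr', zero_add, add_zero]

theorem sq_sqrt_sub_sqrt {u v : ℝ} (hu : 0 ≤ u) (hv : 0 ≤ v) :
    (√u - √v) ^ 2 = u + v - 2 * √(u * v) := by
  rw [sub_sq, sq_sqrt hu, sq_sqrt hv, sqrt_mul hu]
  ring

theorem integral_sq_sqrt_sub_sqrt {f g : ℝ → ℝ} {a b : ℝ} (hf0 : ∀ x, 0 ≤ f x)
    (hg0 : ∀ x, 0 ≤ g x) (hf : IntervalIntegrable f volume a b)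
    (hg : IntervalIntegrable g volume a b)
    (hfg : IntervalIntegrable (fun x => √(f x * g x)) volume a b) :
    ∫ x in a..b, (√(f x) - √(g x)) ^ 2
      = (∫ x in a..b, f x) + (∫ x in a..b, g x) - 2 * ∫ x in a..b, √(f x * g x) := by
  simp_rw [sq_sqrt_sub_sqrt (hf0 _) (hg0 _)]
  rw [intervalIntegral.integral_sub (hf.add hg) (hfg.const_mul 2),
    intervalIntegral.integral_add hf hg, intervalIntegral.integral_const_mul]

theorem gdens_of_mem {x : ℝ} (hx : x ∈ Icc (0:ℝ) (1/2)) : gdens x = 960 * x^2 * (1/2 - x)^2 :=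
  indicator_of_mem hx _

-- `x (1/2 - x) ≥ 0` exactly on `[0, 1/2]`; this form makes the continuity of `g` evident.
theorem gdens_eq_max (x : ℝ) : gdens x = 960 * max (x * (1/2 - x)) 0 ^ 2 := by
  by_cases hx : x ∈ Icc (0:ℝ) (1/2)
  · rw [gdens_of_mem hx, max_eq_left (mul_nonneg hx.1 (by linarith [hx.2]))]
    ring
  · have : x * (1/2 - x) ≤ 0 := by
      rw [mem_Icc, not_and_or, not_le, not_le] at hx
      rcases hx with hx | hx <;> nlinarith
    rw [gdens, indicator_of_notMem hx, max_eq_right this]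
    ring

@[fun_prop]
theorem continuous_gdens : Continuous gdens := by
  rw [funext gdens_eq_max]
  fun_prop

theorem gdens_nonneg (x : ℝ) : 0 ≤ gdens x := by
  rw [gdens_eq_max]
  positivity

theorem gdens_eq_zero {x : ℝ} (hx : x ≤ 0 ∨ 1/2 ≤ x) : gdens x = 0 := by
  have : x * (1/2 - x) ≤ 0 := by rcases hx with hx | hx <;> nlinarith
  rw [gdens_eq_max, max_eq_right this]
  ring

theorem integral_gdens {a b : ℝ} (ha : a ≤ 0) (hb : 1/2 ≤ b) : ∫ x in a..b, gdens x = 1 := by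
  rw [integral_eq_integral_of_eqOn_zero continuous_gdens ha hb
      (fun x hx => gdens_eq_zero (.inl hx.2)) (fun x hx => gdens_eq_zero (.inr hx.1)),
    intervalIntegral.integral_congr (g := fun x => 240 * x^2 - 960 * x^3 + 960 * x^4)]
  · simp (disch := (apply Continuous.intervalIntegrable; fun_prop)) only
      [intervalIntegral.integral_add, intervalIntegral.integral_sub,
        intervalIntegral.integral_const_mul, integral_pow]
    norm_num
  · intro x hx
    rw [uIcc_of_le (by norm_num)] at hx
    dsimp only
    rw [gdens_of_mem hx]
    ring

theorem sqrt_gdens_sub_mul_gdens_of_mem {θ x : ℝ} (hx : x ∈ Icc θ (1/2)) (hθ : 0 ≤ θ) :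
    √(gdens (x - θ) * gdens x) = 960 * x * (x - θ) * (1/2 - x) * (1/2 + θ - x) := by
  obtain ⟨hθx, hx⟩ := hx
  rw [gdens_of_mem ⟨by linarith, by linarith⟩, gdens_of_mem ⟨by linarith, hx⟩,
    show 960 * (x - θ) ^ 2 * (1/2 - (x - θ)) ^ 2 * (960 * x ^ 2 * (1/2 - x) ^ 2)
      = (960 * x * (x - θ) * (1/2 - x) * (1/2 + θ - x)) ^ 2 by ring]
  have : 0 ≤ x := by linarith
  have : 0 ≤ x - θ := by linarith
  have : 0 ≤ 1/2 - x := by linarith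
  have : 0 ≤ 1/2 + θ - x := by linarith
  exact sqrt_sq (by positivity)

theorem integral_sqrt_gdens_sub_mul_gdens {θ : ℝ} (hθ : θ ∈ Icc (0:ℝ) (1/2)) :
    ∫ x in (0:ℝ)..1, √(gdens (x - θ) * gdens x) = 1 - 20 * θ^2 * (1 - 2*θ + 8*θ^3/5) := by
  obtain ⟨hθ0, hθ1⟩ := hθ
  rw [integral_eq_integral_of_eqOn_zero (by fun_prop) hθ0 (by norm_num : (1/2:ℝ) ≤ 1)
      (fun x hx => by simp [gdens_eq_zero (.inl (by linarith [hx.2]) : x - θ ≤ 0 ∨ _)])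
      (fun x hx => by simp [gdens_eq_zero (.inr hx.1)]),
    -- the linear term is written `x^1` so that `integral_pow` covers every monomial
    intervalIntegral.integral_congr (g := fun x => (-240*θ - 480*θ^2) * x^1
      + (240 + 1440*θ + 960*θ^2) * x^2 + (-960 - 1920*θ) * x^3 + 960 * x^4)]
  · simp (disch := (apply Continuous.intervalIntegrable; fun_prop)) only
      [intervalIntegral.integral_add, intervalIntegral.integral_const_mul, integral_pow]
    ring
  · intro x hx
    rw [uIcc_of_le hθ1] at hx
    dsimp only
    rw [sqrt_gdens_sub_mul_gdens_of_mem hx hθ0]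
    ring

/-- For any `θ ∈ (0,1/2)`, `∫₀¹ √(g(x−θ)g(x)) dx = 1 − 20θ²(1 − 2θ + 8θ³/5)`, hence
the squared Hellinger distance is `40θ²(1 − 2θ + 8θ³/5)`. -/
theorem stmt13 (θ : ℝ) (hθ : θ ∈ Set.Ioo (0:ℝ) (1/2)) :
    (∫ x in (0:ℝ)..1, Real.sqrt (gdens (x - θ) * gdens x))
      = 1 - 20 * θ^2 * (1 - 2*θ + 8*θ^3/5) ∧
    (∫ x in (0:ℝ)..1, (Real.sqrt (gdens (x - θ)) - Real.sqrt (gdens x))^2)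
      = 40 * θ^2 * (1 - 2*θ + 8*θ^3/5) := by
  have hθ' : θ ∈ Icc (0:ℝ) (1/2) := Ioo_subset_Icc_self hθ
  have haff := integral_sqrt_gdens_sub_mul_gdens hθ'
  have hshift : ∫ x in (0:ℝ)..1, gdens (x - θ) = 1 := by
    rw [intervalIntegral.integral_comp_sub_right gdens θ]
    exact integral_gdens (by linarith [hθ'.1]) (by linarith [hθ'.2])
  refine ⟨haff, ?_⟩
  rw [integral_sq_sqrt_sub_sqrt (fun _ => gdens_nonneg _) gdens_nonneg
      (by apply Continuous.intervalIntegrable; fun_prop) (continuous_gdens.intervalIntegrable _ _)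
      (by apply Continuous.intervalIntegrable; fun_prop),
    hshift, integral_gdens le_rfl (by norm_num), haff]
  ring
end

section
/- Let g(x) = 960 x²(1/2 − x)² 1_{[0,1/2]}(x) and f_θ(x) = g(x−θ). There exists a constant c̃ > 1 such that for all θ, θ' ∈ (0,1/2), c̃^{−1}|θ − θ'|² ≤ H²(P_{f_θ}, P_{f_{θ'}}) ≤ c̃|θ − θ'|². -/
/-!
Since `√g = √960 · bump` with `bump y = (y (1/2 - y))₊`, translation invariance turns the integral
into `960 · D |θ - θ'|`, where `D h = ∫ (bump x - bump (x - h))²`. As `bump` is `1/2`-Lipschitz and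
the integrand vanishes off `[0, h + 1/2]`, `D h ≤ h²/4 · (h + 1/2)`. For the lower bound: when
`h ≤ 1/4`, on `[7/16, 1/2]` both copies lie on the parabola and differ by `h (2x - h - 1/2) ≥ h/8`;
when `h ≥ 1/4`, on `[1/8, 1/4]` the shifted copy vanishes while `bump ≥ 1/32`.
-/

open MeasureTheory Real

open Set

/-- The positive part of `y (1/2 - y)`, written as an extension from `[0, 1/2]` so that its
Lipschitz constant comes from that of `projIcc`. -/
noncomputable def bump : ℝ → ℝ :=
  IccExtend (by norm_num : (0:ℝ) ≤ 1/2) fun z => (z : ℝ) * (1/2 - z)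

lemma bump_of_mem {y : ℝ} (hy : y ∈ Icc (0:ℝ) (1/2)) : bump y = y * (1/2 - y) :=
  IccExtend_of_mem _ _ hy

lemma bump_of_nonpos {y : ℝ} (hy : y ≤ 0) : bump y = 0 := by
  simp [bump, IccExtend_of_le_left _ _ hy]

lemma bump_of_half_le {y : ℝ} (hy : 1/2 ≤ y) : bump y = 0 := by
  simp [bump, IccExtend_of_right_le _ _ hy]

lemma continuous_bump : Continuous bump :=
  (by fun_prop : Continuous fun z : Icc (0:ℝ) (1/2) => (z : ℝ) * (1/2 - z)).Icc_extend'

lemma lipschitzWith_bump : LipschitzWith (1/2) bump := by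
  have hp : LipschitzWith (1/2) fun z : Icc (0:ℝ) (1/2) => (z : ℝ) * (1/2 - z) := by
    refine LipschitzWith.of_dist_le_mul fun z w => ?_
    obtain ⟨z, hz0, hz1⟩ := z
    obtain ⟨w, hw0, hw1⟩ := w
    rw [Subtype.dist_eq, Real.dist_eq, Real.dist_eq,
      show z * (1/2 - z) - w * (1/2 - w) = (z - w) * (1/2 - z - w) by ring, abs_mul]
    have : |1/2 - z - w| ≤ 1/2 := abs_le.2 ⟨by linarith, by linarith⟩
    push_cast
    nlinarith [abs_nonneg (z - w)]
  have h := hp.comp (LipschitzWith.projIcc (by norm_num : (0:ℝ) ≤ 1/2))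
  rwa [mul_one] at h

lemma hasCompactSupport_bump : HasCompactSupport bump :=
  HasCompactSupport.intro (isCompact_Icc (a := 0) (b := 1/2)) fun y hy => by
    rcases not_and_or.1 hy with hy | hy
    · exact bump_of_nonpos (by linarith [not_le.1 hy])
    · exact bump_of_half_le (by linarith [not_le.1 hy])

lemma sqrt_gdens (y : ℝ) : √(gdens y) = √960 * bump y := by
  by_cases hy : y ∈ Icc (0:ℝ) (1/2)
  · rw [gdens, indicator_of_mem hy, bump_of_mem hy,
      show 960 * y^2 * (1/2 - y)^2 = 960 * (y * (1/2 - y))^2 by ring,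
      sqrt_mul (by norm_num), sqrt_sq (mul_nonneg hy.1 (by linarith [hy.2]))]
  · rw [gdens, indicator_of_notMem hy, sqrt_zero]
    rcases not_and_or.1 hy with hy | hy
    · rw [bump_of_nonpos (by linarith [not_le.1 hy]), mul_zero]
    · rw [bump_of_half_le (by linarith [not_le.1 hy]), mul_zero]

lemma mul_sub_le_integral_of_le_on_Icc {f : ℝ → ℝ} {a b c : ℝ} (hab : a ≤ b)
    (hf : Integrable f) (hf0 : 0 ≤ f) (hc : ∀ x ∈ Icc a b, c ≤ f x) :
    c * (b - a) ≤ ∫ x, f x := by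
  rw [← Real.volume_real_Icc_of_le hab]
  exact (setIntegral_ge_of_const_le_real measurableSet_Icc measure_Icc_lt_top.ne hc
    hf.integrableOn).trans (setIntegral_le_integral hf (ae_of_all _ hf0))

lemma integral_le_mul_sub_of_le_on_Icc {f : ℝ → ℝ} {a b M : ℝ} (hab : a ≤ b)
    (hf : Integrable f) (hM : ∀ x ∈ Icc a b, f x ≤ M) (hf0 : ∀ x ∉ Icc a b, f x = 0) :
    ∫ x, f x ≤ M * (b - a) := by
  rw [← setIntegral_eq_integral_of_forall_compl_eq_zero hf0, ← Real.volume_real_Icc_of_le hab,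
    mul_comm, ← smul_eq_mul, ← setIntegral_const]
  exact setIntegral_mono_on hf.integrableOn (integrableOn_const measure_Icc_lt_top.ne)
    measurableSet_Icc hM

noncomputable def bumpShiftDefect (h : ℝ) : ℝ := ∫ x, (bump x - bump (x - h))^2

lemma integral_sq_sub_sqrt_gdens (θ θ' : ℝ) :
    ∫ x, (√(gdens (x - θ)) - √(gdens (x - θ')))^2 = 960 * bumpShiftDefect (θ' - θ) := by
  have hshift := integral_sub_right_eq_self (μ := volume)
    (fun x => (bump x - bump (x - (θ' - θ)))^2) θ
  simp only [sub_sub_sub_cancel_right] at hshift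
  simp only [sqrt_gdens, ← mul_sub, mul_pow, sq_sqrt (by norm_num : (0:ℝ) ≤ 960),
    integral_const_mul, bumpShiftDefect, ← hshift]

lemma bumpShiftDefect_neg (h : ℝ) : bumpShiftDefect (-h) = bumpShiftDefect h := by
  have hshift := integral_sub_right_eq_self (μ := volume) (fun x => (bump x - bump (x + h))^2) h
  simp only [sub_add_cancel] at hshift
  simp only [bumpShiftDefect, sub_neg_eq_add, ← hshift]
  congr 1 with x
  ring

lemma bumpShiftDefect_abs (h : ℝ) : bumpShiftDefect |h| = bumpShiftDefect h := by
  rcases abs_cases h with ⟨hh, -⟩ | ⟨hh, -⟩ <;> simp [hh, bumpShiftDefect_neg]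

lemma integrable_sq_bump_sub_bump_sub (h : ℝ) :
    Integrable fun x => (bump x - bump (x - h))^2 := by
  have hsupp := (hasCompactSupport_bump.sub
    (hasCompactSupport_bump.comp_homeomorph (Homeomorph.subRight h))).comp_left
    (g := fun t : ℝ => t^2) (by simp)
  exact ((continuous_bump.sub (continuous_bump.comp (continuous_sub_right h))).pow 2
    ).integrable_of_hasCompactSupport hsupp

lemma bumpShiftDefect_le {h : ℝ} (hh : 0 ≤ h) : bumpShiftDefect h ≤ h^2 / 4 * (h + 1/2) := by
  rw [bumpShiftDefect]
  have hM : ∀ x ∈ Icc 0 (h + 1/2), (bump x - bump (x - h))^2 ≤ h^2 / 4 := fun x _ => by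
    have hlip := lipschitzWith_bump.dist_le_mul x (x - h)
    rw [Real.dist_eq, Real.dist_eq, sub_sub_cancel, abs_of_nonneg hh] at hlip
    push_cast at hlip
    nlinarith [sq_abs (bump x - bump (x - h)), abs_nonneg (bump x - bump (x - h))]
  have hzero : ∀ x ∉ Icc 0 (h + 1/2), (bump x - bump (x - h))^2 = 0 := fun x hx => by
    rcases not_and_or.1 hx with hx | hx
    · rw [bump_of_nonpos (by linarith [not_le.1 hx]), bump_of_nonpos (by linarith [not_le.1 hx])]
      ring
    · rw [bump_of_half_le (by linarith [not_le.1 hx]), bump_of_half_le (by linarith [not_le.1 hx])]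
      ring
  simpa using
    integral_le_mul_sub_of_le_on_Icc (by linarith) (integrable_sq_bump_sub_bump_sub h) hM hzero

lemma le_bumpShiftDefect_of_le_quarter {h : ℝ} (hh0 : 0 ≤ h) (hh : h ≤ 1/4) :
    h^2 / 1024 ≤ bumpShiftDefect h := by
  have hc : ∀ x ∈ Icc (7/16 : ℝ) (1/2), h^2 / 64 ≤ (bump x - bump (x - h))^2 := fun x hx => by
    obtain ⟨hx0, hx1⟩ := hx
    rw [bump_of_mem ⟨by linarith, hx1⟩, bump_of_mem ⟨by linarith, by linarith⟩,
      show x * (1/2 - x) - (x - h) * (1/2 - (x - h)) = h * (1/2 + h - 2 * x) by ring, mul_pow]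
    nlinarith [mul_nonneg (sq_nonneg h) (by linarith : (0:ℝ) ≤ (2 * x - h - 1/2) - 1/8)]
  have := mul_sub_le_integral_of_le_on_Icc (by norm_num) (integrable_sq_bump_sub_bump_sub h)
    (fun x => sq_nonneg _) hc
  rw [bumpShiftDefect]
  linarith

lemma le_bumpShiftDefect_of_quarter_le {h : ℝ} (hh : 1/4 ≤ h) : 1/8192 ≤ bumpShiftDefect h := by
  have hc : ∀ x ∈ Icc (1/8 : ℝ) (1/4), 1/1024 ≤ (bump x - bump (x - h))^2 := fun x hx => by
    obtain ⟨hx0, hx1⟩ := hx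
    rw [bump_of_mem ⟨by linarith, by linarith⟩, bump_of_nonpos (by linarith), sub_zero]
    have : 1/32 ≤ x * (1/2 - x) := by nlinarith
    nlinarith
  have := mul_sub_le_integral_of_le_on_Icc (by norm_num) (integrable_sq_bump_sub_bump_sub h)
    (fun x => sq_nonneg _) hc
  rw [bumpShiftDefect]
  linarith

lemma sq_div_le_bumpShiftDefect {h : ℝ} (hh0 : 0 ≤ h) (hh : h ≤ 1/2) :
    h^2 / 2048 ≤ bumpShiftDefect h := by
  rcases le_total h (1/4) with hsmall | hlarge
  · linarith [le_bumpShiftDefect_of_le_quarter hh0 hsmall, sq_nonneg h]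
  · nlinarith [le_bumpShiftDefect_of_quarter_le hlarge]

/-- There exists `c̃ > 1` with
`c̃⁻¹|θ−θ'|² ≤ H²(P_{f_θ}, P_{f_{θ'}}) ≤ c̃|θ−θ'|²` for all `θ, θ' ∈ (0,1/2)`,
where `f_θ = g(·−θ)`. -/
theorem stmt14 :
    ∃ c : ℝ, 1 < c ∧
      ∀ θ ∈ Set.Ioo (0:ℝ) (1/2), ∀ θ' ∈ Set.Ioo (0:ℝ) (1/2),
        c⁻¹ * |θ - θ'|^2
            ≤ (∫ x : ℝ, (Real.sqrt (gdens (x - θ)) - Real.sqrt (gdens (x - θ')))^2) ∧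
        (∫ x : ℝ, (Real.sqrt (gdens (x - θ)) - Real.sqrt (gdens (x - θ')))^2)
            ≤ c * |θ - θ'|^2 := by
  refine ⟨240, by norm_num, fun θ hθ θ' hθ' => ?_⟩
  rw [integral_sq_sub_sqrt_gdens, ← bumpShiftDefect_abs, abs_sub_comm θ' θ]
  have hh0 : 0 ≤ |θ - θ'| := abs_nonneg _
  have hh : |θ - θ'| ≤ 1/2 :=
    abs_sub_le_iff.2 ⟨by linarith [hθ.2, hθ'.1], by linarith [hθ.1, hθ'.2]⟩
  have hlower := sq_div_le_bumpShiftDefect hh0 hh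
  have hupper := bumpShiftDefect_le hh0
  constructor <;> nlinarith
end

section
/- Let β > 0 and let f : [0,1] → ℝ satisfy ‖f‖_{H^β} < ∞, where ‖f‖_{H^β} = ‖f‖_{C^β} + |f|_{H^β}. Let a > 0 satisfy (e^a − 1) + a^β/⌊β⌋! ≤ 1/2. Then for every x ∈ [0,1] and every h with x + h ∈ [0,1] and |h| ≤ a (|f(x)|/‖f‖_{H^β})^{1/β}, one has |f(x+h) − f(x)| ≤ (1/2)|f(x)|, and in particular |f(x)|/2 ≤ |f(x+h)| ≤ 3|f(x)|/2. -/
/-!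
Write `u = (|f x| / R) ^ (1 / β)`, so that `|f x| = R u ^ β`. Taking `β`-th roots, flatness
says `|f⁽ʲ⁾(x)| ≤ R u ^ (β - j)`, so for `|h| ≤ a u` the `j`-th Taylor term of `f` at `x` is
at most `aʲ / j! · |f x|`. Expanding to order `k` with the Lagrange remainder written as the
increment `(f⁽ᵏ⁾(ξ) - f⁽ᵏ⁾(x)) hᵏ / k!`, the Hölder bound makes the remainder at most
`a ^ β / k! · |f x|`. Summing, `|f (x + h) - f x| ≤ (eᵃ - 1 + a ^ β / k!) |f x| ≤ |f x| / 2`.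
-/
open Real Set
open scoped Nat

theorem Finset.sum_range_succ_eq_add_sum_Icc {M : Type*} [AddCommMonoid M] (g : ℕ → M)
    (n : ℕ) :
    ∑ j ∈ Finset.range (n + 1), g j = g 0 + ∑ j ∈ Finset.Icc 1 n, g j := by
  rw [Finset.range_eq_Ico, Finset.sum_eq_sum_Ico_succ_bot n.succ_pos, zero_add,
    Nat.succ_eq_add_one, Finset.Ico_add_one_right_eq_Icc]

theorem Real.sum_Icc_pow_div_factorial_le_exp_sub_one {a : ℝ} (ha : 0 ≤ a) (n : ℕ) :
    ∑ j ∈ Finset.Icc 1 n, a ^ j / j ! ≤ exp a - 1 := by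
  have := Real.sum_le_exp_of_nonneg ha (n + 1)
  rw [Finset.sum_range_succ_eq_add_sum_Icc] at this
  simp only [pow_zero, Nat.factorial_zero, Nat.cast_one, div_one] at this
  linarith

theorem Nat.cast_ceil_sub_one_lt {β : ℝ} (hβ : 0 < β) : ((⌈β⌉₊ - 1 : ℕ) : ℝ) < β := by
  have hceil := Nat.ceil_lt_add_one hβ.le
  rw [Nat.cast_sub (Nat.one_le_ceil_iff.2 hβ), Nat.cast_one]
  linarith

theorem Real.rpow_sub_natCast_mul_pow {t β : ℝ} (ht : 0 ≤ t) (hβ : β ≠ 0) (n : ℕ) :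
    t ^ (β - n) * t ^ n = t ^ β := by
  rw [← rpow_add_natCast' ht (by simpa using hβ), sub_add_cancel]

/-- The `β`-th root of a flatness bound `Dᵝ ≤ Rʲ |f x| ^ (β - j)` when `|f x| = R u ^ β`. -/
theorem Real.le_mul_rpow_sub_of_rpow_le {D R u β j : ℝ} (hβ : 0 < β) (hD : 0 ≤ D)
    (hR : 0 ≤ R) (hu : 0 ≤ u) (h : D ^ β ≤ R ^ j * (R * u ^ β) ^ (β - j)) : D ≤ R * u ^ (β - j) := by
  have hroot : (R * u ^ (β - j)) ^ β = R ^ j * (R * u ^ β) ^ (β - j) := by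
    rw [mul_rpow hR (rpow_nonneg hu _), mul_rpow hR (rpow_nonneg hu _), ← rpow_mul hu,
      ← rpow_mul hu, ← mul_assoc, ← rpow_add' hR (by simpa using hβ.ne'), add_sub_cancel,
      mul_comm β]
  exact (rpow_le_rpow_iff hD (by positivity) hβ).1 (hroot ▸ h)

theorem iteratedDerivWithin_eq_of_subset {f : ℝ → ℝ} {s t : Set ℝ} {n m : ℕ}
    (hst : s ⊆ t) (hs : UniqueDiffOn ℝ s) (ht : UniqueDiffOn ℝ t) (hf : ContDiffOn ℝ n f t) (hm : m ≤ n)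
    {x : ℝ} (hx : x ∈ s) : iteratedDerivWithin m f s x = iteratedDerivWithin m f t x := by
  simp only [iteratedDerivWithin_eq_iteratedFDerivWithin]
  rw [iteratedFDerivWithin_subset hst hs ht (hf.of_le (mod_cast hm)) hx]

section FlatHolder

variable {f : ℝ → ℝ} {s : Set ℝ} {k : ℕ}

/-- Taylor's formula with the Lagrange remainder written as an increment of `f⁽ᵏ⁾`, the form
a Hölder bound on `f⁽ᵏ⁾` controls; for `k = 0` it holds with `ξ = y`. -/
theorem exists_sub_eq_sum_add_iteratedDerivWithin_sub (hs : UniqueDiffOn ℝ s)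
    (hf : ContDiffOn ℝ k f s) {x y : ℝ} (hxy : uIcc x y ⊆ s) :
    ∃ ξ ∈ uIcc x y, f y - f x =
      ∑ j ∈ Finset.Icc 1 k, iteratedDerivWithin j f s x * (y - x) ^ j / j ! +
        (iteratedDerivWithin k f s ξ - iteratedDerivWithin k f s x) * (y - x) ^ k / k ! := by
  rcases k with _ | m
  · exact ⟨y, right_mem_uIcc, by simp⟩
  rcases eq_or_ne x y with rfl | hne
  · refine ⟨x, left_mem_uIcc, ?_⟩
    rw [Finset.sum_eq_zero fun j hj => by rw [sub_self, zero_pow (by grind), mul_zero, zero_div]]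
    simp
  have hI : UniqueDiffOn ℝ (uIcc x y) := uniqueDiffOn_Icc (inf_lt_sup.2 hne)
  have hfI := hf.mono hxy
  have hD : ∀ j ≤ m + 1, ∀ z ∈ uIcc x y,
      iteratedDerivWithin j f (uIcc x y) z = iteratedDerivWithin j f s z :=
    fun j hj z hz => iteratedDerivWithin_eq_of_subset hxy hI hs hf hj hz
  obtain ⟨ξ, hξ, hT⟩ := taylor_mean_remainder_lagrange hne (hfI.of_le (mod_cast m.le_succ))
    ((hfI.differentiableOn_iteratedDerivWithin (mod_cast m.lt_succ_self) hI).mono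
      uIoo_subset_uIcc_self)
  have hsum : ∑ j ∈ Finset.Icc 1 m, ((j ! : ℝ)⁻¹ * (y - x) ^ j) •
      iteratedDerivWithin j f (uIcc x y) x =
        ∑ j ∈ Finset.Icc 1 m, iteratedDerivWithin j f s x * (y - x) ^ j / j ! :=
    Finset.sum_congr rfl fun j hj => by
      rw [hD j (by grind) x left_mem_uIcc, smul_eq_mul]
      ring
  rw [taylor_within_apply, Finset.sum_range_succ_eq_add_sum_Icc, hsum,
    hD _ le_rfl ξ (uIoo_subset_uIcc_self hξ)] at hT
  refine ⟨ξ, uIoo_subset_uIcc_self hξ, ?_⟩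
  rw [Finset.sum_Icc_succ_top (by omega)]
  simp only [Nat.factorial_zero, Nat.cast_one, inv_one, pow_zero, mul_one, iteratedDerivWithin_zero,
    one_smul] at hT
  linear_combination hT

theorem abs_sub_le_of_flat_of_holder (hs : UniqueDiffOn ℝ s) (hf : ContDiffOn ℝ k f s)
    {x y β R a u : ℝ} (hxy : uIcc x y ⊆ s) (hβ : 0 < β) (hkβ : (k : ℝ) ≤ β) (hR : 0 ≤ R)
    (ha : 0 ≤ a) (hu : 0 ≤ u) (hyx : |y - x| ≤ a * u)
    (hflat : ∀ j ∈ Finset.Icc 1 k, |iteratedDerivWithin j f s x| ≤ R * u ^ (β - j))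
    (hhold : ∀ z ∈ uIcc x y,
      |iteratedDerivWithin k f s z - iteratedDerivWithin k f s x| ≤ R * |z - x| ^ (β - k)) :
    |f y - f x| ≤ (exp a - 1 + a ^ β / k !) * (R * u ^ β) := by
  obtain ⟨ξ, hξ, hT⟩ := exists_sub_eq_sum_add_iteratedDerivWithin_sub hs hf hxy
  have hterm : ∀ j ∈ Finset.Icc 1 k,
      |iteratedDerivWithin j f s x * (y - x) ^ j / j !| ≤ a ^ j / j ! * (R * u ^ β) := by
    intro j hj
    calc |iteratedDerivWithin j f s x * (y - x) ^ j / j !|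
        = |iteratedDerivWithin j f s x| * |y - x| ^ j / j ! := by
          rw [abs_div, abs_mul, abs_pow, Nat.abs_cast]
      _ ≤ R * u ^ (β - j) * (a * u) ^ j / j ! := by gcongr; exact hflat j hj
      _ = a ^ j / j ! * (R * (u ^ (β - j) * u ^ j)) := by ring
      _ = a ^ j / j ! * (R * u ^ β) := by rw [rpow_sub_natCast_mul_pow hu hβ.ne']
  have hrem : |(iteratedDerivWithin k f s ξ - iteratedDerivWithin k f s x) * (y - x) ^ k / k !|
      ≤ a ^ β / k ! * (R * u ^ β) := by
    have hξx : |ξ - x| ≤ |y - x| := abs_sub_left_of_mem_uIcc hξ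
    calc |(iteratedDerivWithin k f s ξ - iteratedDerivWithin k f s x) * (y - x) ^ k / k !|
        = |iteratedDerivWithin k f s ξ - iteratedDerivWithin k f s x| * |y - x| ^ k / k ! := by
          rw [abs_div, abs_mul, abs_pow, Nat.abs_cast]
      _ ≤ R * |y - x| ^ (β - k) * |y - x| ^ k / k ! := by
          gcongr
          exact (hhold ξ hξ).trans (by gcongr)
      _ = R * |y - x| ^ β / k ! := by
          rw [mul_assoc, rpow_sub_natCast_mul_pow (abs_nonneg _) hβ.ne']
      _ ≤ R * (a * u) ^ β / k ! := by gcongr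
      _ = a ^ β / k ! * (R * u ^ β) := by rw [mul_rpow ha hu]; ring
  calc |f y - f x|
      ≤ ∑ j ∈ Finset.Icc 1 k, |iteratedDerivWithin j f s x * (y - x) ^ j / j !| +
        |(iteratedDerivWithin k f s ξ - iteratedDerivWithin k f s x) * (y - x) ^ k / k !| := by
        rw [hT]
        refine (abs_add_le _ _).trans ?_
        gcongr
        exact Finset.abs_sum_le_sum_abs _ _
    _ ≤ ∑ j ∈ Finset.Icc 1 k, a ^ j / j ! * (R * u ^ β) + a ^ β / k ! * (R * u ^ β) :=
        add_le_add (Finset.sum_le_sum hterm) hrem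
    _ ≤ (exp a - 1 + a ^ β / k !) * (R * u ^ β) := by
        rw [← Finset.sum_mul, ← add_mul]
        gcongr
        exact sum_Icc_pow_div_factorial_le_exp_sub_one ha k

end FlatHolder

theorem stmt16_general (β : ℝ) (hβ : 0 < β) (k : ℕ) (hk : k = ⌈β⌉₊ - 1)
    (f : ℝ → ℝ) (R : ℝ) (hR : 0 < R)
    (hf : ContDiffOn ℝ k f (Set.Icc 0 1))
    (hflat : ∀ j : ℕ, 1 ≤ j → (j:ℝ) < β → ∀ x ∈ Set.Icc (0:ℝ) 1,
      |iteratedDerivWithin j f (Set.Icc 0 1) x| ^ β ≤ R ^ (j:ℝ) * |f x| ^ (β - j))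
    (hhold : ∀ x ∈ Set.Icc (0:ℝ) 1, ∀ y ∈ Set.Icc (0:ℝ) 1,
      |iteratedDerivWithin k f (Set.Icc 0 1) x - iteratedDerivWithin k f (Set.Icc 0 1) y|
        ≤ R * |x - y| ^ (β - k))
    (a : ℝ) (ha : 0 < a)
    (haβ : (Real.exp a - 1) + a ^ β / (Nat.factorial k) ≤ 1/2) :
    ∀ x ∈ Set.Icc (0:ℝ) 1, ∀ h : ℝ, x + h ∈ Set.Icc (0:ℝ) 1 →
      |h| ≤ a * (|f x| / R) ^ (1/β) →
      |f (x + h) - f x| ≤ (1/2) * |f x| ∧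
      |f x| / 2 ≤ |f (x + h)| ∧ |f (x + h)| ≤ 3 * |f x| / 2 := by
  intro x hx h hxh hh
  set u := (|f x| / R) ^ (1 / β) with hu_def
  have hu : 0 ≤ u := by positivity
  have hRu : R * u ^ β = |f x| := by
    rw [hu_def, one_div, rpow_inv_rpow (by positivity) hβ.ne']
    field_simp
  have hkβ : (k : ℝ) < β := hk ▸ Nat.cast_ceil_sub_one_lt hβ
  have hI : uIcc x (x + h) ⊆ Set.Icc 0 1 := uIcc_subset_Icc hx hxh
  have hflat_root (j : ℕ) (hj : j ∈ Finset.Icc 1 k) :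
      |iteratedDerivWithin j f (Set.Icc 0 1) x| ≤ R * u ^ (β - j) := by
    obtain ⟨hj1, hjk⟩ := Finset.mem_Icc.1 hj
    refine le_mul_rpow_sub_of_rpow_le hβ (abs_nonneg _) hR.le hu ?_
    rw [hRu]
    exact hflat j hj1 (lt_of_le_of_lt (mod_cast hjk) hkβ) x hx
  have hhalf : |f (x + h) - f x| ≤ 1 / 2 * |f x| := by
    have := abs_sub_le_of_flat_of_holder (uniqueDiffOn_Icc zero_lt_one) hf hI hβ hkβ.le hR.le
      ha.le hu (by simpa using hh) hflat_root (fun z hz => hhold z (hI hz) x hx)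
    rw [hRu] at this
    exact this.trans (by gcongr)
  refine ⟨hhalf, ?_, ?_⟩ <;>
    linarith [abs_sub_abs_le_abs_sub (f x) (f (x + h)), abs_sub_abs_le_abs_sub (f (x + h)) (f x),
      abs_sub_comm (f x) (f (x + h))]

/-- Flat Hölder lemma (Lemma 1 of the companion paper): let `β > 0`, let
`k = ⌈β⌉₊ − 1` be the largest integer strictly smaller than `β`, and suppose
`f` is `k`-times differentiable on `[0,1]` with `‖f‖_{H^β} ≤ R`, encoded by the
sup-norm bound, the flatness bounds `|f^{(j)}(x)|^β ≤ R^j |f(x)|^{β−j}` for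
`1 ≤ j < β`, and the Hölder bound on `f^{(k)}` with constant `R`. If `a > 0`
satisfies `(e^a − 1) + a^β/k! ≤ 1/2`, then for `|h| ≤ a(|f(x)|/R)^{1/β}` we have
`|f(x+h) − f(x)| ≤ (1/2)|f(x)|`, hence `|f(x)|/2 ≤ |f(x+h)| ≤ 3|f(x)|/2`. -/
theorem stmt16 (β : ℝ) (hβ : 0 < β) (k : ℕ) (hk : k = ⌈β⌉₊ - 1)
    (f : ℝ → ℝ) (R : ℝ) (hR : 0 < R)
    (hf : ContDiffOn ℝ k f (Set.Icc 0 1))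
    (hsup : ∀ x ∈ Set.Icc (0:ℝ) 1, |f x| ≤ R)
    (hflat : ∀ j : ℕ, 1 ≤ j → (j:ℝ) < β → ∀ x ∈ Set.Icc (0:ℝ) 1,
      |iteratedDerivWithin j f (Set.Icc 0 1) x| ^ β ≤ R ^ (j:ℝ) * |f x| ^ (β - j))
    (hhold : ∀ x ∈ Set.Icc (0:ℝ) 1, ∀ y ∈ Set.Icc (0:ℝ) 1,
      |iteratedDerivWithin k f (Set.Icc 0 1) x - iteratedDerivWithin k f (Set.Icc 0 1) y|
        ≤ R * |x - y| ^ (β - k))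
    (a : ℝ) (ha : 0 < a)
    (haβ : (Real.exp a - 1) + a ^ β / (Nat.factorial k) ≤ 1/2) :
    ∀ x ∈ Set.Icc (0:ℝ) 1, ∀ h : ℝ, x + h ∈ Set.Icc (0:ℝ) 1 →
      |h| ≤ a * (|f x| / R) ^ (1/β) →
      |f (x + h) - f x| ≤ (1/2) * |f x| ∧
      |f x| / 2 ≤ |f (x + h)| ∧ |f (x + h)| ≤ 3 * |f x| / 2 :=
  stmt16_general β hβ k hk f R hR hf hflat hhold a ha haβ
end

section
/- In the setting of the two perturbed densities f₁, f₂ (defined via f_j = f₀(1 − γF + γ K∘v_j), with v_j(x) = (F₀(x) − F₀(x_{j−1}))/F, K ≥ 0 supported on [0,1] with ∫K = 1, γF < 1), the squared Hellinger distance satisfies ‖√f₁ − √f₂‖₂² = 2F ∫₀¹ (√(1 − γF + γK(u)) − √(1 − γF))² du ≥ 2F(1 − γF)(√(1+γ) − 1)². -/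
open MeasureTheory Real Set

/-! Pushing `f₀(x) dx` on `[0, 1]` forward by the primitive `F₀` gives Lebesgue measure on
`[0, F₀ 1]`, and `(√f₁ - √f₂)² = f₀ · g ∘ F₀` with `g u = (√q(v) - √q(v - 1))²`,
`v = (u - F₀ x₀) / F`, `q = 1 - γF + γK`. As `q = 1 - γF` off `[0, 1]`, the bumps `q(v)` and
`q(v - 1)` interact only at `v = 1`, so `∫ g` is twice `F ∫₀¹ (√q - √(1 - γF))²`.
For the bound, `(√(c + k) - √c)² ≥ c (√(1 + k) - 1)²` when `0 ≤ c ≤ 1`, and Cauchy–Schwarz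
`∫₀¹ √(1 + γK) ≤ √(1 + γ)` gives `∫₀¹ (√(1 + γK) - 1)² = 2 + γ - 2 ∫₀¹ √(1 + γK) ≥ (√(1 + γ) - 1)²`.
-/

theorem exists_Icc_eq_inter_preimage_Iic {G : ℝ → ℝ} {a b t : ℝ} (hab : a ≤ b)
    (hG : ContinuousOn G (Icc a b)) (hGm : MonotoneOn G (Icc a b)) (ht : G a ≤ t) :
    ∃ s ∈ Icc a b, G s = min t (G b) ∧ Icc a b ∩ G ⁻¹' Iic t = Icc a s := by
  rcases le_or_gt (G b) t with hbt | htb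
  · refine ⟨b, right_mem_Icc.2 hab, (min_eq_right hbt).symm, ?_⟩
    exact inter_eq_left.2 fun x hx => (hGm hx (right_mem_Icc.2 hab) hx.2).trans hbt
  set S := Icc a b ∩ G ⁻¹' Iic t
  have hSa : a ∈ S := ⟨left_mem_Icc.2 hab, ht⟩
  have hSbdd : BddAbove S := bddAbove_Icc.mono inter_subset_left
  have hsS : sSup S ∈ S :=
    (hG.preimage_isClosed_of_isClosed isClosed_Icc isClosed_Iic).csSup_mem ⟨a, hSa⟩ hSbdd
  have hS : S = Icc a (sSup S) := by
    ext x
    refine ⟨fun hx => ⟨hx.1.1, le_csSup hSbdd hx⟩, fun hx => ?_⟩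
    have hxI : x ∈ Icc a b := ⟨hx.1, hx.2.trans hsS.1.2⟩
    exact ⟨hxI, (hGm hxI hsS.1 hx.2).trans hsS.2⟩
  refine ⟨sSup S, hsS.1, ?_, hS⟩
  rw [min_eq_left htb.le]
  refine le_antisymm hsS.2 (not_lt.1 fun hlt => ?_)
  obtain ⟨y, hy, hGy⟩ := intermediate_value_Icc hsS.1.2 (hG.mono (Icc_subset_Icc hsS.1.1 le_rfl))
    ⟨hlt.le, htb.le⟩
  have hyS : y ∈ S := ⟨⟨hsS.1.1.trans hy.1, hy.2⟩, hGy.le⟩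
  have hys : y = sSup S := le_antisymm (le_csSup hSbdd hyS) hy.1
  exact hlt.ne (hys ▸ hGy)

theorem monotoneOn_primitive {f : ℝ → ℝ} {a b : ℝ} (hf : ∀ x, 0 ≤ f x)
    (hfi : IntervalIntegrable f volume a b) :
    MonotoneOn (fun x => ∫ t in a..x, f t) (Icc a b) := fun _ hx _ hy hxy =>
  intervalIntegral.integral_mono_interval le_rfl hx.1 hxy (.of_forall hf)
    (hfi.mono_set (uIcc_subset_uIcc_left (Icc_subset_uIcc hy)))

theorem continuousOn_primitive_of_le {f : ℝ → ℝ} {a b : ℝ} (hab : a ≤ b)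
    (hfi : IntervalIntegrable f volume a b) :
    ContinuousOn (fun x => ∫ t in a..x, f t) (Icc a b) :=
  uIcc_of_le hab ▸ intervalIntegral.continuousOn_primitive_interval' hfi left_mem_uIcc

theorem map_restrict_withDensity_primitive {f : ℝ → ℝ} {a b : ℝ} (hab : a ≤ b)
    (hf : ∀ x, 0 ≤ f x) (hfi : IntervalIntegrable f volume a b) :
    ((volume.withDensity fun x => ENNReal.ofReal (f x)).restrict (Icc a b)).map
        (fun x => ∫ t in a..x, f t) = volume.restrict (Icc 0 (∫ t in a..b, f t)) := by
  set G := fun x => ∫ t in a..x, f t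
  have hG : ContinuousOn G (Icc a b) := continuousOn_primitive_of_le hab hfi
  have hGm : MonotoneOn G (Icc a b) := monotoneOn_primitive hf hfi
  have hGa : G a = 0 := intervalIntegral.integral_same
  refine (Measure.ext_of_Iic _ _ fun t => ?_).symm
  rw [Measure.restrict_apply measurableSet_Iic,
    Measure.map_apply_of_aemeasurable (hG.aemeasurable measurableSet_Icc) measurableSet_Iic,
    Measure.restrict_apply' measurableSet_Icc, inter_comm (G ⁻¹' _)]
  rcases lt_or_ge t 0 with ht | ht
  · have hG0 : Icc a b ∩ G ⁻¹' Iic t = ∅ := eq_empty_of_forall_notMem fun x hx =>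
      ht.not_ge ((hGa ▸ hGm (left_mem_Icc.2 hab) hx.1 hx.1.1).trans hx.2)
    have hI0 : Iic t ∩ Icc 0 (∫ t in a..b, f t) = ∅ :=
      eq_empty_of_forall_notMem fun x hx => ht.not_ge (hx.2.1.trans hx.1)
    rw [hG0, hI0, measure_empty, measure_empty]
  obtain ⟨s, hs, hGs, hS⟩ := exists_Icc_eq_inter_preimage_Iic hab hG hGm (hGa ▸ ht)
  have hfs : IntegrableOn f (Icc a s) volume :=
    (intervalIntegrable_iff_integrableOn_Icc_of_le hs.1).1
      (hfi.mono_set (uIcc_subset_uIcc_left (Icc_subset_uIcc hs)))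
  rw [hS, withDensity_apply _ measurableSet_Icc, ← ofReal_integral_eq_lintegral_ofReal hfs
    (.of_forall hf), integral_Icc_eq_integral_Ioc, ← intervalIntegral.integral_of_le hs.1]
  have hI : Iic t ∩ Icc 0 (∫ t in a..b, f t) = Icc 0 (min t (∫ t in a..b, f t)) := by
    ext x; simp only [mem_inter_iff, mem_Iic, mem_Icc, le_min_iff]; tauto
  rw [hI, Real.volume_Icc, sub_zero]
  exact congrArg ENNReal.ofReal hGs.symm

theorem integral_mul_comp_primitive {f g : ℝ → ℝ} {a b : ℝ} (hab : a ≤ b)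
    (hf : ∀ x, 0 ≤ f x) (hfi : IntervalIntegrable f volume a b) (hg : Measurable g) :
    ∫ x in a..b, f x * g (∫ t in a..x, f t) = ∫ u in 0..∫ t in a..b, f t, g u := by
  have hfi' : IntegrableOn f (Icc a b) := (intervalIntegrable_iff_integrableOn_Icc_of_le hab).1 hfi
  rw [intervalIntegral.integral_of_le hab, ← integral_Icc_eq_integral_Ioc,
    intervalIntegral.integral_of_le (intervalIntegral.integral_nonneg hab fun x _ => hf x),
    ← integral_Icc_eq_integral_Ioc, ← map_restrict_withDensity_primitive hab hf hfi,
    integral_map ((continuousOn_primitive_of_le hab hfi).aemeasurable measurableSet_Icc)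
      hg.aestronglyMeasurable,
    setIntegral_withDensity_eq_setIntegral_toReal_smul₀ hfi'.aemeasurable.ennreal_ofReal
      (.of_forall fun _ => ENNReal.ofReal_lt_top) _ measurableSet_Icc]
  refine setIntegral_congr_fun measurableSet_Icc fun x _ => ?_
  rw [ENNReal.toReal_ofReal (hf x), smul_eq_mul]

theorem sq_sqrt_add_sub_sqrt_le {x y : ℝ} (hx : 0 ≤ x) (hy : 0 ≤ y) :
    (√(x + y) - √x) ^ 2 ≤ y := by
  have hxy : √x ≤ √(x + y) := sqrt_le_sqrt (by linarith)
  nlinarith [sq_sqrt hx, sq_sqrt (add_nonneg hx hy), sqrt_nonneg x]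

theorem sq_sqrt_mul_sub_sqrt_mul {w p q : ℝ} (hw : 0 ≤ w) :
    (√(w * p) - √(w * q)) ^ 2 = w * (√p - √q) ^ 2 := by
  rw [sqrt_mul hw, sqrt_mul hw, ← mul_sub, mul_pow, sq_sqrt hw]

theorem mul_sq_sqrt_one_add_sub_one_le {c k : ℝ} (hc0 : 0 ≤ c) (hc1 : c ≤ 1) (hk : 0 ≤ k) :
    c * (√(1 + k) - 1) ^ 2 ≤ (√(c + k) - √c) ^ 2 := by
  have h1 : 1 ≤ √(1 + k) := one_le_sqrt.2 (by linarith)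
  have h2 : √c * √(1 + k) ≤ √(c + k) := by
    rw [← sqrt_mul hc0]; exact sqrt_le_sqrt (by nlinarith)
  calc c * (√(1 + k) - 1) ^ 2 = (√c * (√(1 + k) - 1)) ^ 2 := by rw [mul_pow, sq_sqrt hc0]
    _ ≤ (√(c + k) - √c) ^ 2 :=
      pow_le_pow_left₀ (mul_nonneg (sqrt_nonneg c) (by linarith)) (by linarith) 2

theorem sq_sqrt_sub_sqrt_shift_eq {q : ℝ → ℝ} {c : ℝ} (hq : ∀ v ∉ Icc 0 1, q v = c) {v : ℝ}
    (hv : v ≠ 1) :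
    (√(q v) - √(q (v - 1))) ^ 2 = (√(q v) - √c) ^ 2 + (√(q (v - 1)) - √c) ^ 2 := by
  by_cases h : v ∈ Icc 0 1
  · rw [hq (v - 1) fun h' => hv (le_antisymm h.2 (by linarith [h'.1])), sub_self, sq 0,
      mul_zero, add_zero]
  · rw [hq v h, sub_self, sq 0, mul_zero, zero_add, ← neg_sub, neg_sq]

theorem sq_sqrt_sub_sqrt_shift_eq_zero {q : ℝ → ℝ} {c : ℝ} (hq : ∀ v ∉ Icc 0 1, q v = c) {v : ℝ}
    (hv : v ∉ Icc 0 2) : (√(q v) - √(q (v - 1))) ^ 2 = 0 := by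
  rw [hq v fun h => hv ⟨h.1, h.2.trans one_le_two⟩,
    hq (v - 1) fun h => hv ⟨by linarith [h.1], by linarith [h.2]⟩, sub_self, sq, mul_zero]

theorem integral_sq_sqrt_sub_sqrt_shift {q : ℝ → ℝ} {c : ℝ} (hq : ∀ v ∉ Icc 0 1, q v = c)
    (hi : IntervalIntegrable (fun v => (√(q v) - √c) ^ 2) volume 0 1) :
    ∫ v, (√(q v) - √(q (v - 1))) ^ 2 = 2 * ∫ v in 0..1, (√(q v) - √c) ^ 2 := by
  set φ := fun v => (√(q v) - √c) ^ 2
  have hφ : ∀ v ∉ Icc 0 1, φ v = 0 := fun v hv => by simp [φ, hq v hv]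
  have hφi : Integrable φ :=
    IntegrableOn.integrable_of_forall_notMem_eq_zero
      ((intervalIntegrable_iff_integrableOn_Icc_of_le zero_le_one).1 hi) hφ
  have hsplit : (fun v => (√(q v) - √(q (v - 1))) ^ 2) =ᵐ[volume] fun v => φ v + φ (v - 1) := by
    filter_upwards [Measure.ae_ne volume 1] with v hv using sq_sqrt_sub_sqrt_shift_eq hq hv
  rw [integral_congr_ae hsplit, integral_add hφi (hφi.comp_sub_right 1),
    integral_sub_right_eq_self φ, intervalIntegral.integral_of_le zero_le_one,
    ← integral_Icc_eq_integral_Ioc, setIntegral_eq_integral_of_forall_compl_eq_zero hφ, two_mul]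

theorem intervalIntegral_sq_sqrt_sub_sqrt_shift_comp {q : ℝ → ℝ} {c : ℝ}
    (hq : ∀ v ∉ Icc 0 1, q v = c)
    (hi : IntervalIntegrable (fun v => (√(q v) - √c) ^ 2) volume 0 1) {a F B : ℝ} (ha : 0 ≤ a)
    (hF : 0 < F) (hB : a + 2 * F ≤ B) :
    ∫ u in 0..B, (√(q ((u - a) / F)) - √(q ((u - a) / F - 1))) ^ 2
      = 2 * F * ∫ v in 0..1, (√(q v) - √c) ^ 2 := by
  have hvanish : ∀ u ∉ Icc 0 B, (√(q ((u - a) / F)) - √(q ((u - a) / F - 1))) ^ 2 = 0 := by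
    refine fun u hu => sq_sqrt_sub_sqrt_shift_eq_zero hq fun h => hu ⟨?_, ?_⟩
    · nlinarith [(le_div_iff₀ hF).1 h.1]
    · nlinarith [(div_le_iff₀ hF).1 h.2]
  rw [intervalIntegral.integral_of_le (by linarith), ← integral_Icc_eq_integral_Ioc,
    setIntegral_eq_integral_of_forall_compl_eq_zero hvanish,
    integral_sub_right_eq_self (fun u => (√(q (u / F)) - √(q (u / F - 1))) ^ 2) a,
    Measure.integral_comp_div (fun v => (√(q v) - √(q (v - 1))) ^ 2) F,
    integral_sq_sqrt_sub_sqrt_shift hq hi, abs_of_pos hF, smul_eq_mul]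
  ring

theorem sq_integral_sqrt_le_integral {α : Type*} [MeasurableSpace α] {μ : Measure α}
    [IsProbabilityMeasure μ] {h : α → ℝ} (h0 : 0 ≤ᵐ[μ] h) (hi : Integrable h μ) :
    (∫ x, √(h x) ∂μ) ^ 2 ≤ ∫ x, h x ∂μ := by
  have hsq : (fun x => √(h x) ^ 2) =ᵐ[μ] h := by
    filter_upwards [h0] with x hx using sq_sqrt hx
  have hL2 : MemLp (fun x => √(h x)) 2 μ :=
    (memLp_two_iff_integrable_sq (continuous_sqrt.comp_aestronglyMeasurable
      hi.aestronglyMeasurable)).2 (hi.congr hsq.symm)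
  have hvar := ProbabilityTheory.variance_nonneg (fun x => √(h x)) μ
  rw [ProbabilityTheory.variance_eq_sub hL2] at hvar
  simp only [Pi.pow_apply] at hvar
  rw [← integral_congr_ae hsq]
  linarith

theorem sq_sqrt_one_add_sub_one_le_integral {α : Type*} [MeasurableSpace α] {μ : Measure α}
    [IsProbabilityMeasure μ] {K : α → ℝ} (hK0 : 0 ≤ᵐ[μ] K) (hKi : Integrable K μ)
    (hK1 : ∫ x, K x ∂μ = 1) {γ : ℝ} (hγ : 0 ≤ γ) :
    (√(1 + γ) - 1) ^ 2 ≤ ∫ x, (√(1 + γ * K x) - 1) ^ 2 ∂μ := by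
  have hh0 : 0 ≤ᵐ[μ] fun x => 1 + γ * K x := by
    filter_upwards [hK0] with x hx using add_nonneg zero_le_one (mul_nonneg hγ hx)
  have hhi : Integrable (fun x => 1 + γ * K x) μ := (integrable_const 1).add (hKi.const_mul γ)
  have hhint : ∫ x, 1 + γ * K x ∂μ = 1 + γ := by
    rw [integral_add (integrable_const 1) (hKi.const_mul γ), integral_const_mul, hK1]; simp
  have hsi : Integrable (fun x => √(1 + γ * K x)) μ := by
    refine hhi.mono (continuous_sqrt.comp_aestronglyMeasurable hhi.aestronglyMeasurable) ?_
    filter_upwards [hK0] with x hx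
    have h1 : 1 ≤ 1 + γ * K x := le_add_of_nonneg_right (mul_nonneg hγ hx)
    rw [norm_of_nonneg (sqrt_nonneg _), norm_of_nonneg (zero_le_one.trans h1)]
    exact sqrt_le_self_iff.2 (Or.inr h1)
  have hCS : ∫ x, √(1 + γ * K x) ∂μ ≤ √(1 + γ) :=
    (le_abs_self _).trans (abs_le_sqrt (hhint ▸ sq_integral_sqrt_le_integral hh0 hhi))
  have hexpand : (fun x => (√(1 + γ * K x) - 1) ^ 2) =ᵐ[μ]
      fun x => (1 + γ * K x) - 2 * √(1 + γ * K x) + 1 := by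
    filter_upwards [hh0] with x hx
    rw [sub_sq, sq_sqrt hx]; ring
  rw [integral_congr_ae hexpand, integral_add (hhi.sub' (hsi.const_mul 2)) (integrable_const 1),
    integral_sub hhi (hsi.const_mul 2), integral_const_mul, hhint, sub_sq, sq_sqrt (by linarith)]
  simp only [integral_const, probReal_univ, smul_eq_mul]
  linarith

theorem IntervalIntegrable.sq_sqrt_add_mul_sub_sqrt {K : ℝ → ℝ} {a b c γ : ℝ}
    (hK : IntervalIntegrable K volume a b) (hK0 : ∀ u, 0 ≤ K u) (hc : 0 ≤ c) (hγ : 0 ≤ γ) :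
    IntervalIntegrable (fun u => (√(c + γ * K u) - √c) ^ 2) volume a b := by
  refine (hK.const_mul γ).mono_fun ?_ (.of_forall fun u => ?_)
  · exact (by fun_prop : Continuous fun k => (√(c + γ * k) - √c) ^ 2).comp_aestronglyMeasurable
      hK.def'.aestronglyMeasurable
  · simp only [norm_of_nonneg (sq_nonneg _), norm_of_nonneg (mul_nonneg hγ (hK0 u))]
    exact sq_sqrt_add_sub_sqrt_le hc (mul_nonneg hγ (hK0 u))

theorem mul_sq_sqrt_one_add_sub_one_le_intervalIntegral {K : ℝ → ℝ} {c γ : ℝ}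
    (hK0 : ∀ u, 0 ≤ K u) (hKi : IntervalIntegrable K volume 0 1) (hK1 : ∫ u in 0..1, K u = 1)
    (hc0 : 0 ≤ c) (hc1 : c ≤ 1) (hγ : 0 ≤ γ) :
    c * (√(1 + γ) - 1) ^ 2 ≤ ∫ u in 0..1, (√(c + γ * K u) - √c) ^ 2 := by
  have : IsProbabilityMeasure (volume.restrict (Ioc (0 : ℝ) 1)) := ⟨by simp⟩
  rw [intervalIntegral.integral_of_le zero_le_one] at hK1
  have hone := hKi.sq_sqrt_add_mul_sub_sqrt hK0 zero_le_one hγ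
  rw [sqrt_one] at hone
  calc c * (√(1 + γ) - 1) ^ 2 ≤ c * ∫ u in 0..1, (√(1 + γ * K u) - 1) ^ 2 := by
        rw [intervalIntegral.integral_of_le zero_le_one]
        exact mul_le_mul_of_nonneg_left
          (sq_sqrt_one_add_sub_one_le_integral (.of_forall hK0) hKi.1 hK1 hγ) hc0
    _ = ∫ u in 0..1, c * (√(1 + γ * K u) - 1) ^ 2 :=
        (intervalIntegral.integral_const_mul _ _).symm
    _ ≤ ∫ u in 0..1, (√(c + γ * K u) - √c) ^ 2 :=
        intervalIntegral.integral_mono_on zero_le_one (hone.const_mul c)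
          (hKi.sq_sqrt_add_mul_sub_sqrt hK0 hc0 hγ)
          fun u _ => mul_sq_sqrt_one_add_sub_one_le hc0 hc1 (mul_nonneg hγ (hK0 u))

theorem stmt18_general (f₀ K : ℝ → ℝ) (x₀ x₁ x₂ F γ : ℝ)
    (hf₀0 : ∀ x, 0 ≤ f₀ x)
    (hf₀int : IntervalIntegrable f₀ volume 0 1)
    (hKm : Measurable K) (hK0 : ∀ u, 0 ≤ K u)
    (hKsupp : ∀ u, u ∉ Set.Icc (0:ℝ) 1 → K u = 0)
    (hKint : IntervalIntegrable K volume 0 1)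
    (hK1 : (∫ u in (0:ℝ)..1, K u) = 1)
    (hx0 : 0 ≤ x₀) (h01 : x₀ ≤ x₁) (h12 : x₁ < x₂) (hx2 : x₂ ≤ 1)
    (hF : 0 < F)
    (hF1 : (∫ x in x₀..x₁, f₀ x) = F) (hF2 : (∫ x in x₁..x₂, f₀ x) = F)
    (hγ : 0 < γ) (hγF : γ * F < 1)
    (F₀ : ℝ → ℝ) (hF₀ : ∀ x, F₀ x = ∫ t in (0:ℝ)..x, f₀ t)
    (f₁ f₂ : ℝ → ℝ)
    (hf₁ : ∀ x, f₁ x = f₀ x * (1 - γ * F + γ * K ((F₀ x - F₀ x₀) / F)))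
    (hf₂ : ∀ x, f₂ x = f₀ x * (1 - γ * F + γ * K ((F₀ x - F₀ x₁) / F))) :
    (∫ x in (0:ℝ)..1, (Real.sqrt (f₁ x) - Real.sqrt (f₂ x))^2)
      = 2 * F * ∫ u in (0:ℝ)..1,
          (Real.sqrt (1 - γ * F + γ * K u) - Real.sqrt (1 - γ * F))^2 ∧
    2 * F * (1 - γ * F) * (Real.sqrt (1 + γ) - 1)^2
      ≤ ∫ x in (0:ℝ)..1, (Real.sqrt (f₁ x) - Real.sqrt (f₂ x))^2 := by
  set c := 1 - γ * F
  set q := fun v => c + γ * K v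
  have hq : ∀ v ∉ Icc 0 1, q v = c := fun v hv => by simp [q, hKsupp v hv]
  have hfi : ∀ x ∈ Icc (0:ℝ) 1, IntervalIntegrable f₀ volume 0 x := fun x hx =>
    hf₀int.mono_set (uIcc_subset_uIcc_left (Icc_subset_uIcc hx))
  have hF₀x₁ : F₀ x₁ - F₀ x₀ = F := by
    rw [hF₀, hF₀, intervalIntegral.integral_interval_sub_left (hfi x₁ ⟨by linarith, by linarith⟩)
      (hfi x₀ ⟨hx0, by linarith⟩), hF1]
  have hF₀x₂ : F₀ x₂ - F₀ x₁ = F := by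
    rw [hF₀, hF₀, intervalIntegral.integral_interval_sub_left (hfi x₂ ⟨by linarith, hx2⟩)
      (hfi x₁ ⟨by linarith, by linarith⟩), hF2]
  have hF₀x₂_le : F₀ x₂ ≤ F₀ 1 := by
    rw [hF₀, hF₀]
    exact monotoneOn_primitive hf₀0 hf₀int ⟨by linarith, hx2⟩ ⟨zero_le_one, le_rfl⟩ hx2
  set g := fun u => (√(q ((u - F₀ x₀) / F)) - √(q ((u - F₀ x₀) / F - 1))) ^ 2
  have hpoint : ∀ x, (√(f₁ x) - √(f₂ x)) ^ 2 = f₀ x * g (∫ t in (0:ℝ)..x, f₀ t) := fun x => by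
    have hshift : (F₀ x - F₀ x₁) / F = (F₀ x - F₀ x₀) / F - 1 := by field_simp; linarith
    rw [hf₁, hf₂, hshift, sq_sqrt_mul_sub_sqrt_mul (hf₀0 x), ← hF₀]
  have heq : ∫ x in (0:ℝ)..1, (√(f₁ x) - √(f₂ x)) ^ 2
      = 2 * F * ∫ v in 0..1, (√(q v) - √c) ^ 2 := by
    rw [intervalIntegral.integral_congr fun x _ => hpoint x,
      integral_mul_comp_primitive zero_le_one hf₀0 hf₀int (by fun_prop), ← hF₀]
    exact intervalIntegral_sq_sqrt_sub_sqrt_shift_comp hq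
      (hKint.sq_sqrt_add_mul_sub_sqrt hK0 (by linarith) hγ.le)
      (hF₀ x₀ ▸ intervalIntegral.integral_nonneg hx0 fun t _ => hf₀0 t) hF (by linarith)
  refine ⟨heq, ?_⟩
  rw [heq, mul_assoc]
  exact mul_le_mul_of_nonneg_left (mul_sq_sqrt_one_add_sub_one_le_intervalIntegral hK0 hKint hK1
    (by linarith) (by nlinarith) hγ.le) (by positivity)

/-- For the perturbed densities `f_j = f₀(1 − γF + γ K∘v_j)`, the squared Hellinger
distance satisfies
`‖√f₁ − √f₂‖₂² = 2F ∫₀¹ (√(1 − γF + γK(u)) − √(1 − γF))² du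
  ≥ 2F(1 − γF)(√(1+γ) − 1)²`. -/
theorem stmt18 (f₀ K : ℝ → ℝ) (x₀ x₁ x₂ F γ : ℝ)
    (hf₀m : Measurable f₀) (hf₀0 : ∀ x, 0 ≤ f₀ x)
    (hf₀int : IntervalIntegrable f₀ volume 0 1)
    (hf₀1 : (∫ x in (0:ℝ)..1, f₀ x) = 1)
    (hKm : Measurable K) (hK0 : ∀ u, 0 ≤ K u)
    (hKsupp : ∀ u, u ∉ Set.Icc (0:ℝ) 1 → K u = 0)
    (hKint : IntervalIntegrable K volume 0 1)
    (hK1 : (∫ u in (0:ℝ)..1, K u) = 1)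
    (hx0 : 0 ≤ x₀) (h01 : x₀ ≤ x₁) (h12 : x₁ < x₂) (hx2 : x₂ ≤ 1)
    (hF : 0 < F)
    (hF1 : (∫ x in x₀..x₁, f₀ x) = F) (hF2 : (∫ x in x₁..x₂, f₀ x) = F)
    (hγ : 0 < γ) (hγF : γ * F < 1)
    (F₀ : ℝ → ℝ) (hF₀ : ∀ x, F₀ x = ∫ t in (0:ℝ)..x, f₀ t)
    (f₁ f₂ : ℝ → ℝ)
    (hf₁ : ∀ x, f₁ x = f₀ x * (1 - γ * F + γ * K ((F₀ x - F₀ x₀) / F)))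
    (hf₂ : ∀ x, f₂ x = f₀ x * (1 - γ * F + γ * K ((F₀ x - F₀ x₁) / F))) :
    (∫ x in (0:ℝ)..1, (Real.sqrt (f₁ x) - Real.sqrt (f₂ x))^2)
      = 2 * F * ∫ u in (0:ℝ)..1,
          (Real.sqrt (1 - γ * F + γ * K u) - Real.sqrt (1 - γ * F))^2 ∧
    2 * F * (1 - γ * F) * (Real.sqrt (1 + γ) - 1)^2
      ≤ ∫ x in (0:ℝ)..1, (Real.sqrt (f₁ x) - Real.sqrt (f₂ x))^2 :=
  stmt18_general f₀ K x₀ x₁ x₂ F γ hf₀0 hf₀int hKm hK0 hKsupp hKint hK1 hx0 h01 h12 hx2 hF hF1 hF2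
    hγ hγF F₀ hF₀ f₁ f₂ hf₁ hf₂
end
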